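/- Let M ≥ 2, d ≥ 2 be integers. The expectation of the squared periodic L₂-discrepancy, as H runs uniformly over all d-dimensional weak M-Latin hypercubes with point set X(H) = (1/M)H, equals ((M−1)(M+1)^d + (2M²+1)^d − 2^d·M^{2d}) / (6^d·M²). -/

import Mathlib

/-!
The coordinatewise permutations `σ : Fin d → Perm (Fin M)` preserve weak Latin hypercubes,
so the expectation does not change if the kernel `g(a, b)` of the discrepancy is replaced by its
average `w(a, b)` over all permutations. Since permutations act 2-transitively, `w` is `1/2` on the
diagonal and the off-diagonal mean `(2M - 1)/(6M)` of `g` elsewhere. Writing `w = β + γ·[a = b]`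
and expanding `∏ₖ w(xₖ, yₖ)`, the double sum over `H` becomes a combination of the numbers of pairs
of points of `H` that agree on a set `S` of coordinates; as `H` meets every axis-parallel line
exactly once, these numbers are `M^(d-1) · M^(d-1-|S|)` for `S ≠ univ` and `M^(d-1)` for
`S = univ`. So the double sum takes the same value on every weak Latin hypercube.
-/

/-- `H` is a weak `M`-Latin hypercube: every axis-parallel row of the grid
`(Fin d → Fin M)` contains exactly one point of `H`. -/
def IsWeakLatinHypercube {d M : ℕ} (H : Finset (Fin d → Fin M)) : Prop :=
  ∀ (k : Fin d) (x : Fin d → Fin M), ∃! v : Fin M, Function.update x k v ∈ H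

/-- Squared periodic `L₂`-discrepancy of the point set `(1/M)·H`. -/
noncomputable def periodicL2sq {d M : ℕ} (H : Finset (Fin d → Fin M)) : ℝ :=
  -((M : ℝ) ^ (d - 1)) ^ 2 / 3 ^ d +
    ∑ x ∈ H, ∑ y ∈ H,
      ∏ k : Fin d,
        ((1 : ℝ) / 2 - |(x k : ℝ) / M - (y k : ℝ) / M| +
          |(x k : ℝ) / M - (y k : ℝ) / M| ^ 2)

open Finset Pointwise Equiv
open scoped Nat

section GroupAverage

variable {G α β : Type*} [Group G] [MulAction G α] [AddCommMonoid β]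

theorem Finset.sum_comp_smul_of_smul_mem {W : Finset α} (hW : ∀ g : G, ∀ a ∈ W, g • a ∈ W)
    (g : G) (F : α → β) : ∑ a ∈ W, F (g • a) = ∑ a ∈ W, F a :=
  sum_equiv (MulAction.toPerm g)
    (fun a => ⟨hW g a, fun h => by simpa using hW g⁻¹ _ h⟩) (fun _ _ => rfl)

theorem Finset.card_nsmul_sum_eq_sum_sum_smul [Fintype G] {W : Finset α}
    (hW : ∀ g : G, ∀ a ∈ W, g • a ∈ W) (F : α → β) :
    Fintype.card G • ∑ a ∈ W, F a = ∑ a ∈ W, ∑ g : G, F (g • a) := by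
  rw [sum_comm, ← card_univ, ← sum_const]
  exact sum_congr rfl fun g _ => (sum_comp_smul_of_smul_mem hW g F).symm

theorem offDiag_card_nsmul_sum_smul [Fintype G] [Fintype α] [DecidableEq α]
    [MulAction.IsMultiplyPretransitive G α 2] (f : α → α → β) {a b : α} (hab : a ≠ b) :
    #(univ : Finset α).offDiag • ∑ g : G, f (g • a) (g • b) =
      Fintype.card G • ∑ p ∈ (univ : Finset α).offDiag, f p.1 p.2 := by
  have hinv : ∀ g : G, ∀ p ∈ (univ : Finset α).offDiag, g • p ∈ (univ : Finset α).offDiag := by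
    intro g p
    simp [Prod.smul_fst, Prod.smul_snd]
  rw [card_nsmul_sum_eq_sum_sum_smul hinv, ← sum_const]
  refine sum_congr rfl fun ⟨c, e⟩ hce => ?_
  obtain ⟨h, rfl, rfl⟩ := MulAction.is_two_pretransitive_iff.mp ‹_› hab (mem_offDiag.mp hce).2.2
  simp only [Prod.smul_mk, smul_smul]
  exact (Fintype.sum_equiv (Equiv.mulRight h) _ _ fun _ => rfl).symm

end GroupAverage

theorem Pi.smul_update {ι : Type*} [DecidableEq ι] {G α : ι → Type*} [∀ i, SMul (G i) (α i)]
    (σ : ∀ i, G i) (x : ∀ i, α i) (k : ι) (v : α k) :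
    σ • Function.update x k v = Function.update (σ • x) k (σ k • v) :=
  funext fun j => Function.apply_update (fun j => (σ j • ·)) x k v j

theorem card_filter_forall_mem_eq {ι α : Type*} [Fintype ι] [DecidableEq ι] [Fintype α]
    [DecidableEq α] (T : Finset ι) (v : ι → α) :
    #{z : ι → α | ∀ k ∈ T, z k = v k} = Fintype.card α ^ (Fintype.card ι - #T) := by
  have : ({z : ι → α | ∀ k ∈ T, z k = v k} : Finset _) =
      Fintype.piFinset fun k => if k ∈ T then {v k} else univ := by
    ext z
    simp only [mem_filter, mem_univ, true_and, Fintype.mem_piFinset]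
    refine forall_congr' fun k => ?_
    split_ifs with hk <;> simp [hk]
  rw [this, Fintype.card_piFinset]
  simp [apply_ite, prod_ite, filter_not, card_sdiff]

theorem sum_range_cast (n : ℕ) : ∑ i ∈ range n, (i : ℝ) = n * (n - 1) / 2 := by
  induction n with
  | zero => simp
  | succ n ih => rw [sum_range_succ, ih]; push_cast; ring

theorem sum_range_cast_sq (n : ℕ) :
    ∑ i ∈ range n, (i : ℝ) ^ 2 = n * (n - 1) * (2 * n - 1) / 6 := by
  induction n with
  | zero => simp
  | succ n ih => rw [sum_range_succ, ih]; push_cast; ring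

theorem sum_range_sum_range_abs_sub (n : ℕ) :
    ∑ i ∈ range n, ∑ j ∈ range n, |(i : ℝ) - j| = ((n : ℝ) ^ 3 - n) / 3 := by
  induction n with
  | zero => simp
  | succ n ih =>
    have hrow : ∑ j ∈ range n, |(n : ℝ) - j| = n * (n + 1) / 2 := by
      have hnonneg : ∀ j ∈ range n, |(n : ℝ) - j| = n - j := fun j hj =>
        abs_of_nonneg (sub_nonneg.mpr (by exact_mod_cast (mem_range.mp hj).le))
      rw [sum_congr rfl hnonneg, sum_sub_distrib, sum_const,
        card_range, nsmul_eq_mul, sum_range_cast]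
      ring
    simp only [sum_range_succ, sum_add_distrib, ih, abs_sub_comm _ (n : ℝ), hrow, sub_self,
      abs_zero]
    push_cast
    ring

theorem sum_range_sum_range_sub_sq (n : ℕ) :
    ∑ i ∈ range n, ∑ j ∈ range n, ((i : ℝ) - j) ^ 2 = (n : ℝ) ^ 2 * ((n : ℝ) ^ 2 - 1) / 6 := by
  simp only [sub_sq, sum_add_distrib, sum_sub_distrib, ← mul_sum, ← sum_mul, sum_const,
    card_range, nsmul_eq_mul, mul_assoc, sum_range_cast, sum_range_cast_sq]
  ring

noncomputable def periodicKernel (M : ℕ) (a b : Fin M) : ℝ :=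
  1 / 2 - |(a : ℝ) / M - (b : ℝ) / M| + |(a : ℝ) / M - (b : ℝ) / M| ^ 2

theorem periodicKernel_self (M : ℕ) (a : Fin M) : periodicKernel M a a = 1 / 2 := by
  simp [periodicKernel]

theorem periodicKernel_eq {M : ℕ} (a b : Fin M) :
    periodicKernel M a b = 1 / 2 - |(a : ℝ) - b| / M + ((a : ℝ) - b) ^ 2 / M ^ 2 := by
  rw [periodicKernel, div_sub_div_same, abs_div, Nat.abs_cast, div_pow, sq_abs]

theorem sum_sum_periodicKernel {M : ℕ} (hM : 0 < M) :
    ∑ a : Fin M, ∑ b : Fin M, periodicKernel M a b = (2 * (M : ℝ) ^ 2 + 1) / 6 := by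
  have hrange : ∀ f : ℕ → ℕ → ℝ,
      ∑ a : Fin M, ∑ b : Fin M, f a b = ∑ i ∈ range M, ∑ j ∈ range M, f i j := fun f => by
    simp only [Fin.sum_univ_eq_sum_range (f _),
      Fin.sum_univ_eq_sum_range (fun i => ∑ j ∈ range M, f i j)]
  simp only [periodicKernel_eq]
  rw [hrange fun i j => 1 / 2 - |(i : ℝ) - j| / M + ((i : ℝ) - j) ^ 2 / M ^ 2]
  simp only [sum_add_distrib, sum_sub_distrib, ← sum_div, sum_const, card_range, nsmul_eq_mul,
    sum_range_sum_range_abs_sub, sum_range_sum_range_sub_sq]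
  field_simp
  ring

theorem sum_offDiag_periodicKernel {M : ℕ} (hM : 0 < M) :
    ∑ p ∈ (univ : Finset (Fin M)).offDiag, periodicKernel M p.1 p.2 =
      ((M : ℝ) - 1) * (2 * M - 1) / 6 := by
  have hsplit := sum_union (f := fun p : Fin M × Fin M => periodicKernel M p.1 p.2)
    (disjoint_diag_offDiag (s := univ))
  have hdiag : ∑ p ∈ (univ : Finset (Fin M)).diag, periodicKernel M p.1 p.2 = M / 2 := by
    simp [diag, periodicKernel_self, div_eq_mul_inv]
  rw [diag_union_offDiag, sum_product, sum_sum_periodicKernel hM, hdiag] at hsplit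
  linear_combination -hsplit

theorem sum_perm_periodicKernel_of_ne {M : ℕ} {a b : Fin M} (hab : a ≠ b) :
    ∑ π : Perm (Fin M), periodicKernel M (π a) (π b) = M ! * (2 * M - 1) / (6 * M) := by
  have hM : 2 ≤ M := by
    have := Fin.val_ne_of_ne hab
    omega
  have := Perm.isMultiplyPretransitive (Fin M) 2
  have h := offDiag_card_nsmul_sum_smul (G := Perm (Fin M)) (periodicKernel M) hab
  simp only [offDiag_card, card_univ, Fintype.card_fin, Fintype.card_perm, nsmul_eq_mul,
    Perm.smul_def, sum_offDiag_periodicKernel (by omega : 0 < M)] at h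
  rw [Nat.cast_sub (Nat.le_mul_self M), Nat.cast_mul] at h
  have hM1 : (M : ℝ) - 1 ≠ 0 := sub_ne_zero.mpr (by exact_mod_cast (by omega : M ≠ 1))
  rw [eq_div_iff (by positivity)]
  apply mul_left_cancel₀ hM1
  linear_combination 6 * h

noncomputable def averagedKernel (M : ℕ) (a b : Fin M) : ℝ :=
  if a = b then 1 / 2 else (2 * M - 1) / (6 * M)

theorem sum_perm_periodicKernel {M : ℕ} (a b : Fin M) :
    ∑ π : Perm (Fin M), periodicKernel M (π a) (π b) = M ! * averagedKernel M a b := by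
  by_cases hab : a = b
  · simp [hab, averagedKernel, periodicKernel_self, Fintype.card_perm]
  · rw [sum_perm_periodicKernel_of_ne hab, averagedKernel, if_neg hab, mul_div_assoc]

noncomputable def pairSum {d M : ℕ} (K : Fin M → Fin M → ℝ) (H : Finset (Fin d → Fin M)) : ℝ :=
  ∑ x ∈ H, ∑ y ∈ H, ∏ k, K (x k) (y k)

theorem periodicL2sq_eq_pairSum {d M : ℕ} (H : Finset (Fin d → Fin M)) :
    periodicL2sq H = -((M : ℝ) ^ (d - 1)) ^ 2 / 3 ^ d + pairSum (periodicKernel M) H :=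
  rfl

theorem pairSum_smul {d M : ℕ} (K : Fin M → Fin M → ℝ) (σ : Fin d → Perm (Fin M))
    (H : Finset (Fin d → Fin M)) :
    pairSum K (σ • H) = ∑ x ∈ H, ∑ y ∈ H, ∏ k, K (σ k (x k)) (σ k (y k)) := by
  simp only [pairSum, smul_finset_def, sum_image (MulAction.injective σ).injOn]
  rfl

theorem sum_pairSum_periodicKernel_smul {d M : ℕ} (H : Finset (Fin d → Fin M)) :
    ∑ σ : Fin d → Perm (Fin M), pairSum (periodicKernel M) (σ • H) =
      (M ! : ℝ) ^ d * pairSum (averagedKernel M) H := by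
  have hpoint : ∀ x y : Fin d → Fin M,
      ∑ σ : Fin d → Perm (Fin M), ∏ k, periodicKernel M (σ k (x k)) (σ k (y k)) =
        (M ! : ℝ) ^ d * ∏ k, averagedKernel M (x k) (y k) := fun x y => by
    rw [← Fintype.prod_sum fun k (π : Perm (Fin M)) => periodicKernel M (π (x k)) (π (y k))]
    simp only [sum_perm_periodicKernel, prod_mul_distrib, prod_const, card_univ,
      Fintype.card_fin]
  simp only [pairSum_smul]
  simp only [pairSum, mul_sum]
  rw [sum_comm]
  refine sum_congr rfl fun x _ => ?_
  rw [sum_comm]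
  exact sum_congr rfl fun y _ => hpoint x y

namespace IsWeakLatinHypercube

variable {d M : ℕ} {H : Finset (Fin d → Fin M)}

theorem smul (hH : IsWeakLatinHypercube H) (σ : Fin d → Perm (Fin M)) :
    IsWeakLatinHypercube (σ • H) := by
  intro k x
  rw [(σ k).bijective.existsUnique_iff]
  simpa [← inv_smul_mem_iff, Pi.smul_update] using hH k (σ⁻¹ • x)

theorem eq_of_update_eq (hH : IsWeakLatinHypercube H) {x y : Fin d → Fin M} (hx : x ∈ H)
    (hy : y ∈ H) {k : Fin d} {c : Fin M}
    (hxy : Function.update x k c = Function.update y k c) : x = y := by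
  have hy' : Function.update x k (y k) = y := by
    rw [← Function.update_idem (a := k) (f := x) c (y k), hxy, Function.update_idem,
      Function.update_eq_self]
  have hk : x k = y k :=
    (hH k x).unique (by rwa [Function.update_eq_self]) (by rwa [hy'])
  rw [← hy', ← hk, Function.update_eq_self]

theorem card_filter_forall_eq (hH : IsWeakLatinHypercube H) {S : Finset (Fin d)} {k₀ : Fin d}
    (hk₀ : k₀ ∉ S) (v : Fin d → Fin M) :
    #{x ∈ H | ∀ k ∈ S, x k = v k} = M ^ (d - 1 - #S) := by
  have hcard := card_filter_forall_mem_eq (insert k₀ S) v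
  rw [Fintype.card_fin, Fintype.card_fin, card_insert_of_notMem hk₀, add_comm, ← Nat.sub_sub]
    at hcard
  -- `hcard` decides its filter predicate through a different (but equal) instance
  convert hcard using 1
  -- resetting the coordinate `k₀` is injective on `H`, and every line in direction `k₀` meets `H`
  refine card_bij (fun x _ => Function.update x k₀ (v k₀)) ?_ ?_ ?_
  · intro x hx
    simp only [mem_filter, mem_univ, true_and, mem_insert, forall_eq_or_imp,
      Function.update_self]
    intro k hk
    rw [Function.update_of_ne (ne_of_mem_of_not_mem hk hk₀)]
    exact (mem_filter.mp hx).2 k hk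
  · intro x hx y hy hxy
    exact hH.eq_of_update_eq (mem_filter.mp hx).1 (mem_filter.mp hy).1 hxy
  · intro z hz
    simp only [mem_filter, mem_univ, true_and, mem_insert, forall_eq_or_imp] at hz
    obtain ⟨u, hu, -⟩ := hH k₀ z
    refine ⟨Function.update z k₀ u, mem_filter.mpr ⟨hu, fun k hk => ?_⟩, ?_⟩
    · rw [Function.update_of_ne (ne_of_mem_of_not_mem hk hk₀)]; exact hz.2 k hk
    · rw [Function.update_idem, ← hz.1, Function.update_eq_self]

theorem card_eq (hH : IsWeakLatinHypercube H) (hd : 0 < d) (hM : 0 < M) :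
    #H = M ^ (d - 1) := by
  simpa using hH.card_filter_forall_eq (S := ∅) (k₀ := ⟨0, hd⟩) (notMem_empty _)
    fun _ => ⟨0, hM⟩

theorem sum_sum_ite_forall_eq (hH : IsWeakLatinHypercube H) (hd : 2 ≤ d) (hM : 0 < M)
    (S : Finset (Fin d)) :
    ∑ x ∈ H, ∑ y ∈ H, (if ∀ k ∈ S, x k = y k then (1 : ℝ) else 0) =
      M ^ (d - 2) * M ^ (d - #S) + if S = univ then ((M : ℝ) - 1) * M ^ (d - 2) else 0 := by
  have hcardH : (#H : ℝ) = M ^ (d - 2) * M := by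
    rw [hH.card_eq (by omega) hM, ← pow_succ]
    norm_cast
    congr 1
    omega
  by_cases hS : S = univ
  · subst hS
    have hrow : ∀ x ∈ H, ∑ y ∈ H, (if ∀ k ∈ univ, x k = y k then (1 : ℝ) else 0) = 1 := by
      intro x hx
      simp [← funext_iff, hx]
    rw [sum_congr rfl hrow, sum_const, nsmul_one, hcardH, if_pos rfl, card_univ,
      Fintype.card_fin, Nat.sub_self]
    ring
  · obtain ⟨k₀, -, hk₀⟩ := exists_of_ssubset (ssubset_univ_iff.mpr hS)
    have hrow : ∀ x ∈ H, ∑ y ∈ H, (if ∀ k ∈ S, x k = y k then (1 : ℝ) else 0) =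
        M ^ (d - 1 - #S) := by
      intro x _
      simp only [sum_boole, @eq_comm _ (x _), hH.card_filter_forall_eq hk₀ x, Nat.cast_pow]
    rw [sum_congr rfl hrow, sum_const, nsmul_eq_mul, hcardH, if_neg hS, add_zero, mul_assoc,
      ← pow_succ']
    congr 2
    have : #S < d := by simpa using card_lt_card (ssubset_univ_iff.mpr hS)
    omega

theorem pairSum_averagedKernel (hH : IsWeakLatinHypercube H) (hd : 2 ≤ d) (hM : 0 < M) :
    pairSum (averagedKernel M) H =
      M ^ (d - 2) * ((2 * (M : ℝ) ^ 2 + 1) / (6 * M)) ^ d +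
        ((M : ℝ) - 1) * M ^ (d - 2) * (((M : ℝ) + 1) / (6 * M)) ^ d := by
  set β : ℝ := (2 * M - 1) / (6 * M)
  set γ : ℝ := (M + 1) / (6 * M)
  have hM' : (M : ℝ) ≠ 0 := by positivity
  have hsplit : ∀ a b : Fin M, averagedKernel M a b = γ * (if a = b then 1 else 0) + β := by
    intro a b
    rw [averagedKernel]
    split_ifs <;> simp only [β, γ] <;> field_simp <;> ring
  have hexpand : ∀ x y : Fin d → Fin M, ∏ k, averagedKernel M (x k) (y k) =
      ∑ S ∈ univ.powerset, γ ^ #S * β ^ (d - #S) * (if ∀ k ∈ S, x k = y k then 1 else 0) := by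
    intro x y
    simp only [hsplit, prod_add, prod_mul_distrib, prod_const, prod_boole,
      card_sdiff_of_subset (subset_univ _), card_univ, Fintype.card_fin]
    refine sum_congr rfl fun S _ => ?_
    rw [mul_right_comm]
    -- the two indicators differ only in their decidability instances
    congr 2
  calc pairSum (averagedKernel M) H
      = ∑ S ∈ univ.powerset, γ ^ #S * β ^ (d - #S) *
          ∑ x ∈ H, ∑ y ∈ H, (if ∀ k ∈ S, x k = y k then (1 : ℝ) else 0) := by
        simp only [pairSum, hexpand, mul_sum]
        conv_rhs => rw [sum_comm]
        exact sum_congr rfl fun x _ => sum_comm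
    _ = ∑ S ∈ univ.powerset, γ ^ #S * β ^ (d - #S) *
          (M ^ (d - 2) * M ^ (d - #S) + if S = univ then ((M : ℝ) - 1) * M ^ (d - 2) else 0) := by
        exact sum_congr rfl fun S _ => congrArg _ (hH.sum_sum_ite_forall_eq hd hM S)
    _ = M ^ (d - 2) * (γ + β * M) ^ d + γ ^ d * ((M : ℝ) - 1) * M ^ (d - 2) := by
        simp only [mul_add, sum_add_distrib, mul_ite, mul_zero, sum_ite_eq', mem_powerset_self,
          if_true, card_univ, Fintype.card_fin, Nat.sub_self, pow_zero, mul_one]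
        have hbinom := sum_pow_mul_eq_add_pow γ (β * M) (univ : Finset (Fin d))
        rw [card_univ, Fintype.card_fin] at hbinom
        rw [← hbinom, mul_sum, ← mul_assoc]
        congr 1
        refine sum_congr rfl fun S _ => ?_
        rw [mul_pow]
        ring
    _ = _ := by
        simp only [β, γ]
        field_simp
        ring

end IsWeakLatinHypercube

theorem exists_isWeakLatinHypercube (d M : ℕ) [NeZero M] :
    ∃ H : Finset (Fin d → Fin M), IsWeakLatinHypercube H := by
  refine ⟨univ.filter fun x : Fin d → Fin M => ∑ k, x k = 0, fun k x => ?_⟩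
  simp only [mem_filter, mem_univ, true_and, sum_update_of_mem (mem_univ k),
    add_eq_zero_iff_eq_neg]
  exact existsUnique_eq

theorem sum_filter_isWeakLatinHypercube_pairSum {d M : ℕ}
    [DecidablePred (IsWeakLatinHypercube (d := d) (M := M))]
    (hd : 2 ≤ d) (hM : 0 < M) :
    ∑ H ∈ univ.filter (IsWeakLatinHypercube (d := d) (M := M)), pairSum (periodicKernel M) H =
      #(univ.filter (IsWeakLatinHypercube (d := d) (M := M))) *
        (M ^ (d - 2) * ((2 * (M : ℝ) ^ 2 + 1) / (6 * M)) ^ d +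
          ((M : ℝ) - 1) * M ^ (d - 2) * (((M : ℝ) + 1) / (6 * M)) ^ d) := by
  have hinv : ∀ σ : Fin d → Perm (Fin M),
      ∀ H ∈ univ.filter (IsWeakLatinHypercube (d := d) (M := M)),
        σ • H ∈ univ.filter IsWeakLatinHypercube := by
    simpa using fun σ H (hH : IsWeakLatinHypercube H) => hH.smul σ
  have hcard : Fintype.card (Fin d → Perm (Fin M)) = M ! ^ d := by
    simp [Fintype.card_perm]
  apply mul_left_cancel₀ (by positivity : (M ! : ℝ) ^ d ≠ 0)
  rw [← Nat.cast_pow, ← hcard, ← nsmul_eq_mul, card_nsmul_sum_eq_sum_sum_smul hinv, mul_left_comm,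
    ← nsmul_eq_mul, ← sum_const]
  refine sum_congr rfl fun H hH => ?_
  rw [sum_pairSum_periodicKernel_smul, (mem_filter.mp hH).2.pairSum_averagedKernel hd hM, hcard,
    Nat.cast_pow]

open Classical in
theorem stmt_15 (M d : ℕ) (hM : 2 ≤ M) (hd : 2 ≤ d) :
    (∑ H ∈ Finset.univ.filter
        (fun H : Finset (Fin d → Fin M) => IsWeakLatinHypercube H), periodicL2sq H) /
        ((Finset.univ.filter
          (fun H : Finset (Fin d → Fin M) => IsWeakLatinHypercube H)).card : ℝ) =
      (((M : ℝ) - 1) * ((M : ℝ) + 1) ^ d + (2 * (M : ℝ) ^ 2 + 1) ^ d -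
          2 ^ d * (M : ℝ) ^ (2 * d)) / (6 ^ d * (M : ℝ) ^ 2) := by
  have : NeZero M := ⟨by omega⟩
  set W := univ.filter fun H : Finset (Fin d → Fin M) => IsWeakLatinHypercube H
  obtain ⟨H₀, hH₀⟩ := exists_isWeakLatinHypercube d M
  have hW : (#W : ℝ) ≠ 0 :=
    Nat.cast_ne_zero.mpr (card_ne_zero_of_mem (mem_filter.mpr ⟨mem_univ _, hH₀⟩))
  rw [sum_congr rfl fun H _ => periodicL2sq_eq_pairSum H, sum_add_distrib, sum_const,
    nsmul_eq_mul, sum_filter_isWeakLatinHypercube_pairSum hd (by omega), ← mul_add,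
    mul_div_cancel_left₀ _ hW]
  obtain ⟨e, rfl⟩ : ∃ e, d = e + 2 := ⟨d - 2, by omega⟩
  have hM0 : (M : ℝ) ≠ 0 := by positivity
  simp only [Nat.add_sub_cancel, show e + 2 - 1 = e + 1 from rfl, div_pow, mul_pow,
    show (6 : ℝ) = 2 * 3 by norm_num]
  field_simp
  ring
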